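/- For each SCI-formula φ, every branch of every TC_SCI-tableau with a labelled formula w : φ at the root has size polynomial in |φ|: there is a fixed polynomial p such that each such branch contains at most p(|φ|) labelled formulas and (in)equality expressions, where |φ| is the number of occurrences of subformulas of φ. -/

import Mathlib

/-- SCI-formulas: atoms, negation, implication, and the identity connective. -/
inductive SCIForm : Type
  | atom : ℕ → SCIForm
  | not : SCIForm → SCIForm
  | imp : SCIForm → SCIForm → SCIForm
  | idn : SCIForm → SCIForm → SCIForm
  deriving DecidableEq

/-- An SCI-structure over a carrier type `U`: a set of designated values and
operations interpreting ¬, →, ≡. -/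
structure SCIStruct (U : Type) where
  D : Set U
  neg : U → U
  imp : U → U → U
  idn : U → U → U

/-- `M` is an SCI-model: `U` is non-empty, `D` is a proper subset of `U`, and the
three semantic conditions hold. -/
def IsSCIModel {U : Type} (M : SCIStruct U) : Prop :=
  Nonempty U ∧ M.D ≠ Set.univ ∧
  (∀ a : U, M.neg a ∈ M.D ↔ a ∉ M.D) ∧
  (∀ a b : U, M.imp a b ∈ M.D ↔ (a ∉ M.D ∨ b ∈ M.D)) ∧
  (∀ a b : U, M.idn a b ∈ M.D ↔ a = b)

/-- A valuation in an SCI-structure: a homomorphism from formulas to `U`. -/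
def IsValuation {U : Type} (M : SCIStruct U) (V : SCIForm → U) : Prop :=
  (∀ φ, V (SCIForm.not φ) = M.neg (V φ)) ∧
  (∀ φ ψ, V (SCIForm.imp φ ψ) = M.imp (V φ) (V ψ)) ∧
  (∀ φ ψ, V (SCIForm.idn φ ψ) = M.idn (V φ) (V ψ))

/-- A formula is SCI-satisfiable if its denotation is designated in some
SCI-model under some valuation. -/
def SCISatisfiable (φ : SCIForm) : Prop :=
  ∃ (U : Type) (M : SCIStruct U) (V : SCIForm → U),
    IsSCIModel M ∧ IsValuation M V ∧ V φ ∈ M.D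

/-- A formula is SCI-valid if its denotation is designated in every SCI-model
under every valuation. -/
def SCIValid (φ : SCIForm) : Prop :=
  ∀ (U : Type) (M : SCIStruct U) (V : SCIForm → U),
    IsSCIModel M → IsValuation M V → V φ ∈ M.D

/-- Labels: a Boolean polarity (`true` = the set L⁺, `false` = the set L⁻)
together with a natural number index; L⁺ and L⁻ are disjoint and countably
infinite. -/
abbrev Label : Type := Bool × ℕ

/-- `w` belongs to L⁺. -/
def posL (w : Label) : Prop := w.1 = true

/-- `w` belongs to L⁻. -/
def negL (w : Label) : Prop := w.1 = false

/-- Expressions occurring on tableau branches: labelled formulas `w : φ`,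
equalities `w = v`, inequalities `w ≠ v`, and the closure symbol ⊥. -/
inductive Node : Type
  | lf : Label → SCIForm → Node
  | eq : Label → Label → Node
  | neq : Label → Label → Node
  | bot : Node
  deriving DecidableEq

/-- `|φ|`: the number of occurrences of subformulas of `φ`. -/
def SCIForm.size : SCIForm → ℕ
  | SCIForm.atom _ => 1
  | SCIForm.not φ => SCIForm.size φ + 1
  | SCIForm.imp φ ψ => SCIForm.size φ + SCIForm.size ψ + 1
  | SCIForm.idn φ ψ => SCIForm.size φ + SCIForm.size ψ + 1

/-- A label is fresh on a branch: no labelled formula on the branch carries it. -/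
def freshL (v : Label) (l : List Node) : Prop := ∀ φ, Node.lf v φ ∉ l

/-- One application of a TC_SCI rule extending a single branch.  A branch is a
list of nodes (in order of introduction, root first) together with the set `E`
of labelled formulas to which a decomposition rule has already been applied
(each decomposition rule may be applied only once to a given labelled formula,
each equality rule only if its conclusion is not yet on the branch, and no rule
is applied to a closed branch). -/
inductive Extend : List Node → Set (Label × SCIForm) → List Node → Set (Label × SCIForm) → Prop
  | negP (l : List Node) (E : Set (Label × SCIForm)) (w v : Label) (φ : SCIForm) :
      Node.bot ∉ l → posL w → Node.lf w (SCIForm.not φ) ∈ l → (w, SCIForm.not φ) ∉ E →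
      negL v → freshL v l →
      Extend l E (l ++ [Node.lf v φ]) (insert (w, SCIForm.not φ) E)
  | negN (l : List Node) (E : Set (Label × SCIForm)) (w v : Label) (φ : SCIForm) :
      Node.bot ∉ l → negL w → Node.lf w (SCIForm.not φ) ∈ l → (w, SCIForm.not φ) ∉ E →
      posL v → freshL v l →
      Extend l E (l ++ [Node.lf v φ]) (insert (w, SCIForm.not φ) E)
  | impP1 (l : List Node) (E : Set (Label × SCIForm)) (w v u : Label) (φ ψ : SCIForm) :
      Node.bot ∉ l → posL w → Node.lf w (SCIForm.imp φ ψ) ∈ l → (w, SCIForm.imp φ ψ) ∉ E →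
      negL v → negL u → v ≠ u → freshL v l → freshL u l →
      Extend l E (l ++ [Node.lf v φ, Node.lf u ψ]) (insert (w, SCIForm.imp φ ψ) E)
  | impP2 (l : List Node) (E : Set (Label × SCIForm)) (w v u : Label) (φ ψ : SCIForm) :
      Node.bot ∉ l → posL w → Node.lf w (SCIForm.imp φ ψ) ∈ l → (w, SCIForm.imp φ ψ) ∉ E →
      negL v → posL u → v ≠ u → freshL v l → freshL u l →
      Extend l E (l ++ [Node.lf v φ, Node.lf u ψ]) (insert (w, SCIForm.imp φ ψ) E)
  | impP3 (l : List Node) (E : Set (Label × SCIForm)) (w v u : Label) (φ ψ : SCIForm) :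
      Node.bot ∉ l → posL w → Node.lf w (SCIForm.imp φ ψ) ∈ l → (w, SCIForm.imp φ ψ) ∉ E →
      posL v → posL u → v ≠ u → freshL v l → freshL u l →
      Extend l E (l ++ [Node.lf v φ, Node.lf u ψ]) (insert (w, SCIForm.imp φ ψ) E)
  | impN (l : List Node) (E : Set (Label × SCIForm)) (w v u : Label) (φ ψ : SCIForm) :
      Node.bot ∉ l → negL w → Node.lf w (SCIForm.imp φ ψ) ∈ l → (w, SCIForm.imp φ ψ) ∉ E →
      posL v → negL u → v ≠ u → freshL v l → freshL u l →
      Extend l E (l ++ [Node.lf v φ, Node.lf u ψ]) (insert (w, SCIForm.imp φ ψ) E)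
  | idnP1 (l : List Node) (E : Set (Label × SCIForm)) (w v u : Label) (φ ψ : SCIForm) :
      Node.bot ∉ l → posL w → Node.lf w (SCIForm.idn φ ψ) ∈ l → (w, SCIForm.idn φ ψ) ∉ E →
      posL v → posL u → v ≠ u → freshL v l → freshL u l →
      Extend l E (l ++ [Node.lf v φ, Node.lf u ψ, Node.eq v u]) (insert (w, SCIForm.idn φ ψ) E)
  | idnP2 (l : List Node) (E : Set (Label × SCIForm)) (w v u : Label) (φ ψ : SCIForm) :
      Node.bot ∉ l → posL w → Node.lf w (SCIForm.idn φ ψ) ∈ l → (w, SCIForm.idn φ ψ) ∉ E →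
      negL v → negL u → v ≠ u → freshL v l → freshL u l →
      Extend l E (l ++ [Node.lf v φ, Node.lf u ψ, Node.eq v u]) (insert (w, SCIForm.idn φ ψ) E)
  | idnN1 (l : List Node) (E : Set (Label × SCIForm)) (w v u : Label) (φ ψ : SCIForm) :
      Node.bot ∉ l → negL w → Node.lf w (SCIForm.idn φ ψ) ∈ l → (w, SCIForm.idn φ ψ) ∉ E →
      posL v → posL u → v ≠ u → freshL v l → freshL u l →
      Extend l E (l ++ [Node.lf v φ, Node.lf u ψ, Node.neq v u]) (insert (w, SCIForm.idn φ ψ) E)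
  | idnN2 (l : List Node) (E : Set (Label × SCIForm)) (w v u : Label) (φ ψ : SCIForm) :
      Node.bot ∉ l → negL w → Node.lf w (SCIForm.idn φ ψ) ∈ l → (w, SCIForm.idn φ ψ) ∉ E →
      posL v → negL u → v ≠ u → freshL v l → freshL u l →
      Extend l E (l ++ [Node.lf v φ, Node.lf u ψ]) (insert (w, SCIForm.idn φ ψ) E)
  | idnN3 (l : List Node) (E : Set (Label × SCIForm)) (w v u : Label) (φ ψ : SCIForm) :
      Node.bot ∉ l → negL w → Node.lf w (SCIForm.idn φ ψ) ∈ l → (w, SCIForm.idn φ ψ) ∉ E →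
      negL v → posL u → v ≠ u → freshL v l → freshL u l →
      Extend l E (l ++ [Node.lf v φ, Node.lf u ψ]) (insert (w, SCIForm.idn φ ψ) E)
  | idnN4 (l : List Node) (E : Set (Label × SCIForm)) (w v u : Label) (φ ψ : SCIForm) :
      Node.bot ∉ l → negL w → Node.lf w (SCIForm.idn φ ψ) ∈ l → (w, SCIForm.idn φ ψ) ∉ E →
      negL v → negL u → v ≠ u → freshL v l → freshL u l →
      Extend l E (l ++ [Node.lf v φ, Node.lf u ψ, Node.neq v u]) (insert (w, SCIForm.idn φ ψ) E)
  | eqNeg (l : List Node) (E : Set (Label × SCIForm)) (w v u y : Label) (φ ψ : SCIForm) :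
      Node.bot ∉ l → Node.lf w φ ∈ l → Node.lf v ψ ∈ l → Node.eq w v ∈ l →
      Node.lf u (SCIForm.not φ) ∈ l → Node.lf y (SCIForm.not ψ) ∈ l →
      Node.eq u y ∉ l →
      Extend l E (l ++ [Node.eq u y]) E
  | eqImp (l : List Node) (E : Set (Label × SCIForm)) (w v w' v' x z : Label) (φ ψ χ θ : SCIForm) :
      Node.bot ∉ l → Node.lf w φ ∈ l → Node.lf v ψ ∈ l → Node.eq w v ∈ l →
      Node.lf w' χ ∈ l → Node.lf v' θ ∈ l → Node.eq w' v' ∈ l →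
      Node.lf x (SCIForm.imp φ χ) ∈ l → Node.lf z (SCIForm.imp ψ θ) ∈ l →
      Node.eq x z ∉ l →
      Extend l E (l ++ [Node.eq x z]) E
  | eqIdn (l : List Node) (E : Set (Label × SCIForm)) (w v w' v' x z : Label) (φ ψ χ θ : SCIForm) :
      Node.bot ∉ l → Node.lf w φ ∈ l → Node.lf v ψ ∈ l → Node.eq w v ∈ l →
      Node.lf w' χ ∈ l → Node.lf v' θ ∈ l → Node.eq w' v' ∈ l →
      Node.lf x (SCIForm.idn φ χ) ∈ l → Node.lf z (SCIForm.idn ψ θ) ∈ l →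
      Node.eq x z ∉ l →
      Extend l E (l ++ [Node.eq x z]) E
  | ruleF (l : List Node) (E : Set (Label × SCIForm)) (w v : Label) (φ : SCIForm) :
      Node.bot ∉ l → Node.lf w φ ∈ l → Node.lf v φ ∈ l → Node.eq w v ∉ l →
      Extend l E (l ++ [Node.eq w v]) E
  | ruleSym (l : List Node) (E : Set (Label × SCIForm)) (w v : Label) :
      Node.bot ∉ l → Node.eq w v ∈ l → Node.eq v w ∉ l →
      Extend l E (l ++ [Node.eq v w]) E
  | ruleTran (l : List Node) (E : Set (Label × SCIForm)) (w v u : Label) :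
      Node.bot ∉ l → Node.eq w v ∈ l → Node.eq v u ∈ l → Node.eq w u ∉ l →
      Extend l E (l ++ [Node.eq w u]) E
  | bot1 (l : List Node) (E : Set (Label × SCIForm)) (w v : Label) :
      Node.bot ∉ l → Node.eq w v ∈ l → Node.neq w v ∈ l →
      Extend l E (l ++ [Node.bot]) E
  | bot2 (l : List Node) (E : Set (Label × SCIForm)) (w v : Label) :
      Node.bot ∉ l → posL w → negL v → Node.eq w v ∈ l →
      Extend l E (l ++ [Node.bot]) E

/-- `ClosedTab l E` holds iff there is a closed TC_SCI-tableau all of whose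
branches extend the branch `l` (with `E` the set of labelled formulas already
decomposed on `l`): either a closure rule applies to `l`, or some rule of
TC_SCI can be applied so that all resulting branches carry closed tableaux. -/
inductive ClosedTab : List Node → Set (Label × SCIForm) → Prop
  | clos1 (l : List Node) (E : Set (Label × SCIForm)) (w v : Label) :
      Node.eq w v ∈ l → Node.neq w v ∈ l → ClosedTab l E
  | clos2 (l : List Node) (E : Set (Label × SCIForm)) (w v : Label) :
      posL w → negL v → Node.eq w v ∈ l → ClosedTab l E
  | negP (l : List Node) (E : Set (Label × SCIForm)) (w v : Label) (φ : SCIForm) :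
      posL w → Node.lf w (SCIForm.not φ) ∈ l → (w, SCIForm.not φ) ∉ E →
      negL v → freshL v l →
      ClosedTab (l ++ [Node.lf v φ]) (insert (w, SCIForm.not φ) E) →
      ClosedTab l E
  | negN (l : List Node) (E : Set (Label × SCIForm)) (w v : Label) (φ : SCIForm) :
      negL w → Node.lf w (SCIForm.not φ) ∈ l → (w, SCIForm.not φ) ∉ E →
      posL v → freshL v l →
      ClosedTab (l ++ [Node.lf v φ]) (insert (w, SCIForm.not φ) E) →
      ClosedTab l E
  | impP (l : List Node) (E : Set (Label × SCIForm)) (w : Label) (φ ψ : SCIForm)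
      (v1 u1 v2 u2 v3 u3 : Label) :
      posL w → Node.lf w (SCIForm.imp φ ψ) ∈ l → (w, SCIForm.imp φ ψ) ∉ E →
      negL v1 → negL u1 → v1 ≠ u1 → freshL v1 l → freshL u1 l →
      negL v2 → posL u2 → v2 ≠ u2 → freshL v2 l → freshL u2 l →
      posL v3 → posL u3 → v3 ≠ u3 → freshL v3 l → freshL u3 l →
      ClosedTab (l ++ [Node.lf v1 φ, Node.lf u1 ψ]) (insert (w, SCIForm.imp φ ψ) E) →
      ClosedTab (l ++ [Node.lf v2 φ, Node.lf u2 ψ]) (insert (w, SCIForm.imp φ ψ) E) →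
      ClosedTab (l ++ [Node.lf v3 φ, Node.lf u3 ψ]) (insert (w, SCIForm.imp φ ψ) E) →
      ClosedTab l E
  | impN (l : List Node) (E : Set (Label × SCIForm)) (w v u : Label) (φ ψ : SCIForm) :
      negL w → Node.lf w (SCIForm.imp φ ψ) ∈ l → (w, SCIForm.imp φ ψ) ∉ E →
      posL v → negL u → v ≠ u → freshL v l → freshL u l →
      ClosedTab (l ++ [Node.lf v φ, Node.lf u ψ]) (insert (w, SCIForm.imp φ ψ) E) →
      ClosedTab l E
  | idnP (l : List Node) (E : Set (Label × SCIForm)) (w : Label) (φ ψ : SCIForm)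
      (v1 u1 v2 u2 : Label) :
      posL w → Node.lf w (SCIForm.idn φ ψ) ∈ l → (w, SCIForm.idn φ ψ) ∉ E →
      posL v1 → posL u1 → v1 ≠ u1 → freshL v1 l → freshL u1 l →
      negL v2 → negL u2 → v2 ≠ u2 → freshL v2 l → freshL u2 l →
      ClosedTab (l ++ [Node.lf v1 φ, Node.lf u1 ψ, Node.eq v1 u1]) (insert (w, SCIForm.idn φ ψ) E) →
      ClosedTab (l ++ [Node.lf v2 φ, Node.lf u2 ψ, Node.eq v2 u2]) (insert (w, SCIForm.idn φ ψ) E) →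
      ClosedTab l E
  | idnN (l : List Node) (E : Set (Label × SCIForm)) (w : Label) (φ ψ : SCIForm)
      (v1 u1 v2 u2 v3 u3 v4 u4 : Label) :
      negL w → Node.lf w (SCIForm.idn φ ψ) ∈ l → (w, SCIForm.idn φ ψ) ∉ E →
      posL v1 → posL u1 → v1 ≠ u1 → freshL v1 l → freshL u1 l →
      posL v2 → negL u2 → v2 ≠ u2 → freshL v2 l → freshL u2 l →
      negL v3 → posL u3 → v3 ≠ u3 → freshL v3 l → freshL u3 l →
      negL v4 → negL u4 → v4 ≠ u4 → freshL v4 l → freshL u4 l →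
      ClosedTab (l ++ [Node.lf v1 φ, Node.lf u1 ψ, Node.neq v1 u1]) (insert (w, SCIForm.idn φ ψ) E) →
      ClosedTab (l ++ [Node.lf v2 φ, Node.lf u2 ψ]) (insert (w, SCIForm.idn φ ψ) E) →
      ClosedTab (l ++ [Node.lf v3 φ, Node.lf u3 ψ]) (insert (w, SCIForm.idn φ ψ) E) →
      ClosedTab (l ++ [Node.lf v4 φ, Node.lf u4 ψ, Node.neq v4 u4]) (insert (w, SCIForm.idn φ ψ) E) →
      ClosedTab l E
  | eqNeg (l : List Node) (E : Set (Label × SCIForm)) (w v u y : Label) (φ ψ : SCIForm) :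
      Node.lf w φ ∈ l → Node.lf v ψ ∈ l → Node.eq w v ∈ l →
      Node.lf u (SCIForm.not φ) ∈ l → Node.lf y (SCIForm.not ψ) ∈ l →
      Node.eq u y ∉ l →
      ClosedTab (l ++ [Node.eq u y]) E → ClosedTab l E
  | eqImp (l : List Node) (E : Set (Label × SCIForm)) (w v w' v' x z : Label) (φ ψ χ θ : SCIForm) :
      Node.lf w φ ∈ l → Node.lf v ψ ∈ l → Node.eq w v ∈ l →
      Node.lf w' χ ∈ l → Node.lf v' θ ∈ l → Node.eq w' v' ∈ l →
      Node.lf x (SCIForm.imp φ χ) ∈ l → Node.lf z (SCIForm.imp ψ θ) ∈ l →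
      Node.eq x z ∉ l →
      ClosedTab (l ++ [Node.eq x z]) E → ClosedTab l E
  | eqIdn (l : List Node) (E : Set (Label × SCIForm)) (w v w' v' x z : Label) (φ ψ χ θ : SCIForm) :
      Node.lf w φ ∈ l → Node.lf v ψ ∈ l → Node.eq w v ∈ l →
      Node.lf w' χ ∈ l → Node.lf v' θ ∈ l → Node.eq w' v' ∈ l →
      Node.lf x (SCIForm.idn φ χ) ∈ l → Node.lf z (SCIForm.idn ψ θ) ∈ l →
      Node.eq x z ∉ l →
      ClosedTab (l ++ [Node.eq x z]) E → ClosedTab l E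
  | ruleF (l : List Node) (E : Set (Label × SCIForm)) (w v : Label) (φ : SCIForm) :
      Node.lf w φ ∈ l → Node.lf v φ ∈ l → Node.eq w v ∉ l →
      ClosedTab (l ++ [Node.eq w v]) E → ClosedTab l E
  | ruleSym (l : List Node) (E : Set (Label × SCIForm)) (w v : Label) :
      Node.eq w v ∈ l → Node.eq v w ∉ l →
      ClosedTab (l ++ [Node.eq v w]) E → ClosedTab l E
  | ruleTran (l : List Node) (E : Set (Label × SCIForm)) (w v u : Label) :
      Node.eq w v ∈ l → Node.eq v u ∈ l → Node.eq w u ∉ l →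
      ClosedTab (l ++ [Node.eq w u]) E → ClosedTab l E


/-! Give every node of a branch a weight: an undecomposed `w : χ` weighs `3|χ| + 1`, a
decomposed labelled formula and an inequality weigh `1`, equalities and `⊥` nothing.
Decomposing `w : χ` frees `3|χ|`, which pays for the at most two labelled formulas and one
inequality it appends, so no rule increases the total weight. Hence a branch from `w : φ`
carries at most `3|φ| + 1` labelled formulas and inequalities. Its equalities are distinct
pairs of labels of those labelled formulas, since equality rules never repeat a conclusion and
decomposition only relates fresh labels, and `⊥` occurs at most once. -/

theorem List.sum_map_add_le_sum_map {ι M : Type*} [AddCommMonoid M] [PartialOrder M]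
    [IsOrderedAddMonoid M] {l : List ι} {f g : ι → M} {a : ι} {d : M} (ha : a ∈ l)
    (hfg : ∀ i ∈ l, f i ≤ g i) (hd : f a + d ≤ g a) :
    (l.map f).sum + d ≤ (l.map g).sum := by
  induction l with
  | nil => simp at ha
  | cons b l ih =>
    have hle : (l.map f).sum ≤ (l.map g).sum :=
      List.sum_le_sum fun i hi => hfg i (List.mem_cons_of_mem _ hi)
    simp only [List.map_cons, List.sum_cons]
    rcases List.mem_cons.mp ha with rfl | ha
    · calc f a + (l.map f).sum + d = (f a + d) + (l.map f).sum := by abel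
        _ ≤ g a + (l.map g).sum := add_le_add hd hle
    · calc f b + (l.map f).sum + d = f b + ((l.map f).sum + d) := add_assoc ..
        _ ≤ g b + (l.map g).sum :=
          add_le_add (hfg b List.mem_cons_self)
            (ih ha fun i hi => hfg i (List.mem_cons_of_mem _ hi))

namespace TCSCI

open Classical in
noncomputable def weight (E : Set (Label × SCIForm)) : Node → ℕ
  | .lf w χ => if (w, χ) ∈ E then 1 else 3 * χ.size + 1
  | .neq _ _ => 1
  | _ => 0

noncomputable def potential (E : Set (Label × SCIForm)) (l : List Node) : ℕ :=
  (l.map (weight E)).sum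

def labels (l : List Node) : List Label :=
  l.filterMap fun | .lf w _ => some w | _ => none

def eqs (l : List Node) : List (Label × Label) :=
  l.filterMap fun | .eq w v => some (w, v) | _ => none

theorem mem_labels {l : List Node} {w : Label} : w ∈ labels l ↔ ∃ χ, Node.lf w χ ∈ l := by
  simp only [labels, List.mem_filterMap]
  constructor
  · rintro ⟨_ | _ | _ | _, hx, hw⟩ <;> simp only [reduceCtorEq, Option.some.injEq] at hw
    exact ⟨_, hw ▸ hx⟩
  · rintro ⟨χ, hχ⟩
    exact ⟨_, hχ, rfl⟩

theorem mem_eqs {l : List Node} {w v : Label} : (w, v) ∈ eqs l ↔ Node.eq w v ∈ l := by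
  simp only [eqs, List.mem_filterMap]
  constructor
  · rintro ⟨_ | _ | _ | _, hx, hwv⟩ <;> simp only [reduceCtorEq, Option.some.injEq] at hwv
    obtain ⟨rfl, rfl⟩ := Prod.mk.inj hwv
    exact hx
  · intro h
    exact ⟨_, h, rfl⟩

@[simp] theorem labels_append (l₁ l₂ : List Node) :
    labels (l₁ ++ l₂) = labels l₁ ++ labels l₂ :=
  List.filterMap_append

@[simp] theorem eqs_append (l₁ l₂ : List Node) : eqs (l₁ ++ l₂) = eqs l₁ ++ eqs l₂ :=
  List.filterMap_append

@[simp] theorem potential_append (E : Set (Label × SCIForm)) (l₁ l₂ : List Node) :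
    potential E (l₁ ++ l₂) = potential E l₁ + potential E l₂ := by
  simp [potential]

theorem weight_lf_le (E : Set (Label × SCIForm)) (w : Label) (χ : SCIForm) :
    weight E (.lf w χ) ≤ 3 * χ.size + 1 := by
  simp only [weight]
  split_ifs <;> omega

theorem one_le_weight_lf (E : Set (Label × SCIForm)) (w : Label) (χ : SCIForm) :
    1 ≤ weight E (.lf w χ) := by
  simp only [weight]
  split_ifs <;> omega

@[simp] theorem weight_eq (E : Set (Label × SCIForm)) (w v : Label) :
    weight E (.eq w v) = 0 := rfl

@[simp] theorem weight_neq (E : Set (Label × SCIForm)) (w v : Label) :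
    weight E (.neq w v) = 1 := rfl

@[simp] theorem weight_bot (E : Set (Label × SCIForm)) : weight E .bot = 0 := rfl

theorem weight_insert_le (E : Set (Label × SCIForm)) (p : Label × SCIForm) (x : Node) :
    weight (insert p E) x ≤ weight E x := by
  cases x <;> simp only [weight, le_refl]
  split_ifs <;> simp_all

theorem potential_insert_add_le {E : Set (Label × SCIForm)} {l : List Node} {w : Label}
    {χ : SCIForm} (hw : Node.lf w χ ∈ l) (hE : (w, χ) ∉ E) :
    potential (insert (w, χ) E) l + 3 * χ.size ≤ potential E l :=
  List.sum_map_add_le_sum_map hw (fun x _ => weight_insert_le E _ x)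
    (by simp [weight, hE, add_comm])

theorem potential_decompose_le {E : Set (Label × SCIForm)} {l new : List Node} {w : Label}
    {χ : SCIForm} (hw : Node.lf w χ ∈ l) (hE : (w, χ) ∉ E)
    (hnew : potential (insert (w, χ) E) new ≤ 3 * χ.size) :
    potential (insert (w, χ) E) (l ++ new) ≤ potential E l := by
  have := potential_insert_add_le hw hE
  rw [potential_append]
  omega

theorem length_labels_le_potential (E : Set (Label × SCIForm)) (l : List Node) :
    (labels l).length ≤ potential E l := by
  induction l with
  | nil => simp [labels]
  | cons x l ih =>
    have := one_le_weight_lf E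
    cases x <;> simp only [labels, potential, List.filterMap_cons, List.map_cons, List.sum_cons,
      List.length_cons, weight_eq, weight_neq, weight_bot] at ih ⊢ <;> grind

theorem length_le_potential_add (E : Set (Label × SCIForm)) (l : List Node) :
    l.length ≤ potential E l + (eqs l).length + l.count .bot := by
  induction l with
  | nil => simp
  | cons x l ih =>
    have := one_le_weight_lf E
    cases x <;> simp only [eqs, potential, List.filterMap_cons, List.map_cons, List.sum_cons,
      List.length_cons, List.count_cons, weight_eq, weight_neq, weight_bot] at ih ⊢ <;> grind

def EqsWellFormed (l : List Node) : Prop :=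
  (eqs l).Nodup ∧ eqs l ⊆ labels l ×ˢ labels l

theorem EqsWellFormed.append_of_eqs_eq_nil {l new : List Node} (hl : EqsWellFormed l)
    (hnew : eqs new = []) : EqsWellFormed (l ++ new) := by
  have heqs : eqs (l ++ new) = eqs l := by simp [hnew]
  refine ⟨heqs ▸ hl.1, fun ⟨a, b⟩ hab => ?_⟩
  obtain ⟨ha, hb⟩ := List.mem_product.mp (hl.2 (heqs ▸ hab))
  simp [List.mem_product, ha, hb]

theorem EqsWellFormed.append_eq {l : List Node} {x z : Label} (hl : EqsWellFormed l)
    (hxz : Node.eq x z ∉ l) (hx : x ∈ labels l) (hz : z ∈ labels l) : EqsWellFormed (l ++ [.eq x z]) := by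
  have heqs : eqs (l ++ [.eq x z]) = eqs l ++ [(x, z)] := by simp; rfl
  have hlabels : labels (l ++ [.eq x z]) = labels l := by simp; rfl
  rw [EqsWellFormed, heqs, hlabels]
  refine ⟨List.nodup_append.mpr ⟨hl.1, List.nodup_singleton _, ?_⟩, ?_⟩
  · simp only [List.mem_singleton, forall_eq]
    rintro p hp rfl
    exact hxz (mem_eqs.mp hp)
  · exact List.append_subset.mpr ⟨hl.2, by simp [List.mem_product, hx, hz]⟩

theorem EqsWellFormed.length_eqs_le {l : List Node} (hl : EqsWellFormed l) :
    (eqs l).length ≤ (labels l).length ^ 2 := by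
  rw [sq, ← List.length_product]
  exact (hl.1.subperm hl.2).length_le

/-- The rules of TC_SCI with polarities forgotten. -/
inductive Step :
    List Node → Set (Label × SCIForm) → List Node → Set (Label × SCIForm) → Prop
  | unary {l E w χ v φ} : Node.lf w χ ∈ l → (w, χ) ∉ E → χ.size = φ.size + 1 →
      Step l E (l ++ [.lf v φ]) (insert (w, χ) E)
  | binary {l E w χ v φ u ψ} : Node.lf w χ ∈ l → (w, χ) ∉ E →
      χ.size = φ.size + ψ.size + 1 →
      Step l E (l ++ [.lf v φ, .lf u ψ]) (insert (w, χ) E)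
  | binaryEq {l E w χ v φ u ψ} : Node.lf w χ ∈ l → (w, χ) ∉ E →
      χ.size = φ.size + ψ.size + 1 → freshL v l →
      Step l E (l ++ [.lf v φ, .lf u ψ, .eq v u]) (insert (w, χ) E)
  | binaryNeq {l E w χ v φ u ψ} : Node.lf w χ ∈ l → (w, χ) ∉ E →
      χ.size = φ.size + ψ.size + 1 →
      Step l E (l ++ [.lf v φ, .lf u ψ, .neq v u]) (insert (w, χ) E)
  | addEq {l E x z} : Node.eq x z ∉ l → x ∈ labels l → z ∈ labels l →
      Step l E (l ++ [.eq x z]) E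
  | close {l E} : Node.bot ∉ l → Step l E (l ++ [.bot]) E

variable {l l' : List Node} {E E' : Set (Label × SCIForm)}

theorem Step.potential_le (h : Step l E l' E') : potential E' l' ≤ potential E l := by
  cases h with
  | unary hw hE hχ | binary hw hE hχ | binaryEq hw hE hχ | binaryNeq hw hE hχ =>
    refine potential_decompose_le hw hE ?_
    simp only [potential, List.map_cons, List.map_nil, List.sum_cons, List.sum_nil, weight_eq,
      weight_neq]
    grind [weight_lf_le]
  | addEq | close => simp [potential]

theorem Step.count_bot_le (h : Step l E l' E') (hl : l.count .bot ≤ 1) :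
    l'.count .bot ≤ 1 := by
  cases h with
  | close hb => simp [List.count_eq_zero.mpr hb]
  | _ => simpa using hl

theorem Step.eqsWellFormed (h : Step l E l' E') (hl : EqsWellFormed l) : EqsWellFormed l' := by
  cases h with
  | @binaryEq w χ v φ u ψ _ _ _ hv =>
    have hl₂ : EqsWellFormed (l ++ [.lf v φ, .lf u ψ]) := hl.append_of_eqs_eq_nil rfl
    have hvu : Node.eq v u ∉ l ++ [.lf v φ, .lf u ψ] := by
      intro hvu
      have hvu : (v, u) ∈ eqs l := mem_eqs.mpr (by simpa using hvu)
      obtain ⟨χ', hχ'⟩ := mem_labels.mp (List.mem_product.mp (hl.2 hvu)).1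
      exact hv χ' hχ'
    simpa using hl₂.append_eq hvu (by simp [mem_labels]) (by simp [mem_labels])
  | addEq hxz hx hz => exact hl.append_eq hxz hx hz
  | _ => exact hl.append_of_eqs_eq_nil rfl

theorem _root_.Extend.toStep (h : Extend l E l' E') (hl : EqsWellFormed l) :
    Step l E l' E' := by
  have labelled {w v : Label} (hwv : Node.eq w v ∈ l) : w ∈ labels l ∧ v ∈ labels l :=
    List.mem_product.mp (hl.2 (mem_eqs.mpr hwv))
  cases h with
  | negP _ _ _ _ _ hw hE | negN _ _ _ _ _ hw hE => exact .unary hw hE rfl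
  | impP1 _ _ _ _ _ _ _ hw hE | impP2 _ _ _ _ _ _ _ hw hE | impP3 _ _ _ _ _ _ _ hw hE
  | impN _ _ _ _ _ _ _ hw hE | idnN2 _ _ _ _ _ _ _ hw hE | idnN3 _ _ _ _ _ _ _ hw hE =>
    exact .binary hw hE rfl
  | idnP1 _ _ _ _ _ _ _ hw hE _ _ _ hv | idnP2 _ _ _ _ _ _ _ hw hE _ _ _ hv =>
    exact .binaryEq hw hE rfl hv
  | idnN1 _ _ _ _ _ _ _ hw hE | idnN4 _ _ _ _ _ _ _ hw hE => exact .binaryNeq hw hE rfl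
  | eqNeg _ _ _ _ _ _ _ _ _ _ hx hz hxz
  | eqImp _ _ _ _ _ _ _ _ _ _ _ _ _ _ _ _ _ hx hz hxz
  | eqIdn _ _ _ _ _ _ _ _ _ _ _ _ _ _ _ _ _ hx hz hxz
  | ruleF _ _ _ _ hx hz hxz =>
    exact .addEq hxz (mem_labels.mpr ⟨_, hx⟩) (mem_labels.mpr ⟨_, hz⟩)
  | ruleSym _ _ _ hwv hvw => exact .addEq hvw (labelled hwv).2 (labelled hwv).1
  | ruleTran _ _ _ _ hwv hvu hwu => exact .addEq hwu (labelled hwv).1 (labelled hvu).2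
  | bot1 _ _ hb | bot2 _ _ hb => exact .close hb

structure BranchInv (B : ℕ) (l : List Node) (E : Set (Label × SCIForm)) : Prop where
  potential_le : potential E l ≤ B
  eqsWellFormed : EqsWellFormed l
  count_bot_le : l.count .bot ≤ 1

theorem branchInv_singleton (w : Label) (φ : SCIForm) :
    BranchInv (3 * φ.size + 1) [.lf w φ] ∅ :=
  ⟨by simp [potential, weight], ⟨List.nodup_nil, List.nil_subset _⟩, by simp⟩

theorem BranchInv.extend {B : ℕ} (hl : BranchInv B l E) (h : Extend l E l' E') :
    BranchInv B l' E' :=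
  have hs := h.toStep hl.eqsWellFormed
  ⟨hs.potential_le.trans hl.potential_le, hs.eqsWellFormed hl.eqsWellFormed,
    hs.count_bot_le hl.count_bot_le⟩

theorem BranchInv.length_le {B : ℕ} (hl : BranchInv B l E) : l.length ≤ B ^ 2 + B + 1 := by
  have hlabels := (length_labels_le_potential E l).trans hl.potential_le
  have heqs : (eqs l).length ≤ B ^ 2 :=
    hl.eqsWellFormed.length_eqs_le.trans (Nat.pow_le_pow_left hlabels 2)
  have := length_le_potential_add E l
  have := hl.potential_le
  have := hl.count_bot_le
  omega

end TCSCI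

/-- every branch of every TC_SCI-tableau with w : φ at the root
(formalized as a finite sequence of branch states, each obtained from the
previous one by a single rule application) has size polynomial in |φ|: there is
a fixed polynomial p such that each such branch contains at most p(|φ|)
labelled formulas and (in)equality expressions. -/
theorem stmt_15 :
    ∃ p : Polynomial ℕ,
      ∀ (φ : SCIForm) (w : Label) (n : ℕ)
        (g : ℕ → List Node) (h : ℕ → Set (Label × SCIForm)),
        g 0 = [Node.lf w φ] → h 0 = ∅ →
        (∀ i < n, Extend (g i) (h i) (g (i + 1)) (h (i + 1))) →
        (g n).length ≤ p.eval (SCIForm.size φ) := by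
  refine ⟨(3 * .X + 1) ^ 2 + (3 * .X + 1) + 1, fun φ w n g h hg0 hh0 hstep => ?_⟩
  have hinv : ∀ i ≤ n, TCSCI.BranchInv (3 * φ.size + 1) (g i) (h i) := by
    intro i
    induction i with
    | zero => exact fun _ => hg0 ▸ hh0 ▸ TCSCI.branchInv_singleton w φ
    | succ i ih => exact fun hi => (ih (by omega)).extend (hstep i (by omega))
  simpa using (hinv n le_rfl).length_le
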